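/- arXiv:1204.2355 — 2 statements merged into one kernel-verified Lean document; each statement's English description precedes it below -/
import Mathlib

section
/- Let β ∈ (0,1), c > 0, and for each n define S_n = Σ_{k=p}^{n} exp(−c · (2β⁴)^{k+1} / (n² β^{4n})). If β⁴ < 1/2, then S_n ≤ (1 + o(1)) · exp(−c β⁴ · 2^{n+1}/n²) as n → ∞; in particular S_n → 0 superexponentially fast, i.e. (1/2^n) log S_n is bounded above by a negative constant times 1/n² asymptotically. -/
open Filter Real Finset Topology

/-!
Write `x = β⁴`, so that `2x ≤ 1` and the `k`-th exponent is `c (2x)^(k+1) / (n² xⁿ)`.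
For `k < n` this is at least `c 2ⁿ / n²`, because `(2x)ⁿ ≤ (2x)^(k+1)`, while the top term
`k = n` equals `exp (-c x 2^(n+1) / n²)`. Hence `S_n` is at most the top term times
`1 + n exp (-c (1 - 2x) 2ⁿ / n²)`, and the correction tends to `0` since `n³ ≤ 2ⁿ` eventually.
Taking logarithms, `log S_n ≤ log 2 - 2 c x 2ⁿ / n²`, and `log 2 ≤ c x 2ⁿ / n²` eventually.
-/

lemma eventually_natCast_pow_le_mul_two_pow (k : ℕ) {ε : ℝ} (hε : 0 < ε) :
    ∀ᶠ n : ℕ in atTop, (n : ℝ) ^ k ≤ ε * 2 ^ n := by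
  filter_upwards [(isLittleO_pow_const_const_pow_of_one_lt (R := ℝ) k one_lt_two).bound hε]
    with n hn
  simpa using hn

lemma tendsto_natCast_mul_exp_neg_mul_two_pow_div_sq {a : ℝ} (ha : 0 < a) :
    Tendsto (fun n : ℕ => n * exp (-a * 2 ^ n / (n : ℝ) ^ 2)) atTop (𝓝 0) := by
  refine squeeze_zero' (Eventually.of_forall fun n => by positivity) ?_
    (tendsto_self_mul_const_pow_of_lt_one (exp_pos (-a)).le (exp_lt_one_iff.2 (by linarith)))
  filter_upwards [eventually_natCast_pow_le_mul_two_pow 3 one_pos, eventually_gt_atTop 0]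
    with n hcube hn
  gcongr
  rw [← exp_nat_mul, exp_le_exp, div_le_iff₀ (by positivity)]
  nlinarith [mul_le_mul_of_nonneg_left hcube ha.le]

section

variable {c x : ℝ}

lemma exp_neg_mul_two_mul_pow_div_le (hc : 0 ≤ c) (hx : 0 < x) (hx2 : 2 * x ≤ 1) {j n : ℕ}
    (hjn : j ≤ n) :
    exp (-c * (2 * x) ^ j / ((n : ℝ) ^ 2 * x ^ n)) ≤ exp (-c * 2 ^ n / (n : ℝ) ^ 2) := by
  have h2n : (2 : ℝ) ^ n ≤ (2 * x) ^ j / x ^ n := by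
    rw [le_div_iff₀ (pow_pos hx n), ← mul_pow]
    exact pow_le_pow_of_le_one (by positivity) hx2 hjn
  rw [exp_le_exp, neg_mul, neg_mul, neg_div, neg_div, neg_le_neg_iff]
  calc c * 2 ^ n / (n : ℝ) ^ 2 ≤ c * ((2 * x) ^ j / x ^ n) / (n : ℝ) ^ 2 := by gcongr
    _ = c * (2 * x) ^ j / ((n : ℝ) ^ 2 * x ^ n) := by
      rw [mul_div_assoc', div_div, mul_comm (x ^ n)]

lemma neg_mul_two_mul_pow_succ_div (hx : x ≠ 0) (n : ℕ) :
    -c * (2 * x) ^ (n + 1) / ((n : ℝ) ^ 2 * x ^ n) = -c * x * 2 ^ (n + 1) / (n : ℝ) ^ 2 := by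
  rw [mul_pow, pow_succ x]
  field_simp

lemma sum_exp_le_one_add_mul (hc : 0 ≤ c) (hx : 0 < x) (hx2 : 2 * x ≤ 1) (p n : ℕ) :
    ∑ k ∈ Icc p n, exp (-c * (2 * x) ^ (k + 1) / ((n : ℝ) ^ 2 * x ^ n)) ≤
      (1 + n * exp (-(c * (1 - 2 * x)) * 2 ^ n / (n : ℝ) ^ 2)) *
        exp (-c * x * 2 ^ (n + 1) / (n : ℝ) ^ 2) := by
  calc _ ≤ ∑ k ∈ range (n + 1), exp (-c * (2 * x) ^ (k + 1) / ((n : ℝ) ^ 2 * x ^ n)) :=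
        sum_le_sum_of_subset_of_nonneg (fun k hk => by simp at hk ⊢; omega)
          fun _ _ _ => (exp_pos _).le
    _ ≤ n * exp (-c * 2 ^ n / (n : ℝ) ^ 2) + exp (-c * x * 2 ^ (n + 1) / (n : ℝ) ^ 2) := by
      rw [sum_range_succ, neg_mul_two_mul_pow_succ_div hx.ne']
      gcongr
      simpa using sum_le_card_nsmul (range n) _ _ fun k hk =>
        exp_neg_mul_two_mul_pow_div_le hc hx hx2 (mem_range.1 hk)
    _ = _ := by
      rw [add_mul, one_mul, add_comm, mul_assoc (n : ℝ), ← exp_add]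
      congr 3
      rw [pow_succ]
      ring

lemma inv_two_pow_mul_log_le {s e : ℝ} {n : ℕ} (hn : n ≠ 0) (hs : 0 < s)
    (hse : s ≤ (1 + e) * exp (-c * x * 2 ^ (n + 1) / (n : ℝ) ^ 2)) (he : e ≤ 1)
    (hlog : log 2 * (n : ℝ) ^ 2 ≤ c * x * 2 ^ n) :
    (1 / 2 ^ n : ℝ) * log s ≤ -(c * x) / (n : ℝ) ^ 2 := by
  have hlog_s : log s ≤ log 2 + -c * x * 2 ^ (n + 1) / (n : ℝ) ^ 2 := by
    rw [← log_exp (-c * x * 2 ^ (n + 1) / (n : ℝ) ^ 2), ← log_mul two_ne_zero (exp_ne_zero _)]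
    exact log_le_log hs (hse.trans (by gcongr; linarith))
  have hlog' : log 2 ≤ c * x * 2 ^ n / (n : ℝ) ^ 2 := (le_div_iff₀ (by positivity)).2 hlog
  rw [one_div, inv_mul_le_iff₀ (by positivity)]
  calc log s ≤ log 2 - 2 * (c * x * 2 ^ n / (n : ℝ) ^ 2) := by
        convert hlog_s using 1; rw [pow_succ]; ring
    _ ≤ -(c * x * 2 ^ n / (n : ℝ) ^ 2) := by linarith
    _ = 2 ^ n * (-(c * x) / (n : ℝ) ^ 2) := by ring

end

theorem stmt6_general (β c : ℝ) (hβ0 : 0 < β) (hc : 0 < c) (p : ℕ)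
    (S : ℕ → ℝ)
    (hS : ∀ n, S n = ∑ k ∈ Finset.Icc p n,
      Real.exp (-c * (2 * β ^ 4) ^ (k + 1) / ((n : ℝ) ^ 2 * β ^ (4 * n))))
    (hβ4 : β ^ 4 < 1 / 2) :
    (∃ e : ℕ → ℝ, Tendsto e atTop (nhds 0) ∧
      ∀ᶠ n in atTop, S n ≤ (1 + e n) * Real.exp (-c * β ^ 4 * 2 ^ (n + 1) / (n : ℝ) ^ 2)) ∧
    ∃ K > (0 : ℝ), ∀ᶠ n in atTop,
      (1 / 2 ^ n : ℝ) * Real.log (S n) ≤ -K / (n : ℝ) ^ 2 := by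
  have hx : 0 < β ^ 4 := by positivity
  have hbound (n : ℕ) : S n ≤ (1 + n * exp (-(c * (1 - 2 * β ^ 4)) * 2 ^ n / (n : ℝ) ^ 2)) *
      exp (-c * β ^ 4 * 2 ^ (n + 1) / (n : ℝ) ^ 2) := by
    simpa only [hS, pow_mul] using sum_exp_le_one_add_mul hc.le hx (by linarith) p n
  have he := tendsto_natCast_mul_exp_neg_mul_two_pow_div_sq
    (mul_pos hc (by linarith : 0 < 1 - 2 * β ^ 4))
  refine ⟨⟨_, he, Eventually.of_forall hbound⟩, c * β ^ 4, by positivity, ?_⟩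
  have hlog2 : 0 < log 2 := log_pos one_lt_two
  filter_upwards [eventually_ge_atTop p, eventually_gt_atTop 0,
    he.eventually (eventually_le_nhds one_pos),
    eventually_natCast_pow_le_mul_two_pow 2 (div_pos (mul_pos hc hx) hlog2)] with n hpn hn he1 hsq
  have hS0 : 0 < S n := hS n ▸ sum_pos (fun _ _ => exp_pos _) (nonempty_Icc.2 hpn)
  refine inv_two_pow_mul_log_le hn.ne' hS0 (hbound n) he1 ?_
  rwa [div_mul_eq_mul_div, le_div_iff₀ hlog2, mul_comm] at hsq

/-- asymptotic bound for the sum `S_n = Σ_{k=p}^n exp(−c(2β⁴)^{k+1}/(n²β^{4n}))`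
when `β⁴ < 1/2`: the sum is dominated by its largest term, and `(1/2^n) log S_n` is
eventually bounded by a negative constant times `1/n²`. -/
theorem stmt6 (β c : ℝ) (hβ0 : 0 < β) (hβ1 : β < 1) (hc : 0 < c) (p : ℕ) (hp : 1 ≤ p)
    (S : ℕ → ℝ)
    (hS : ∀ n, S n = ∑ k ∈ Finset.Icc p n,
      Real.exp (-c * (2 * β ^ 4) ^ (k + 1) / ((n : ℝ) ^ 2 * β ^ (4 * n))))
    (hβ4 : β ^ 4 < 1 / 2) :
    (∃ e : ℕ → ℝ, Tendsto e atTop (nhds 0) ∧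
      ∀ᶠ n in atTop, S n ≤ (1 + e n) * Real.exp (-c * β ^ 4 * 2 ^ (n + 1) / (n : ℝ) ^ 2)) ∧
    ∃ K > (0 : ℝ), ∀ᶠ n in atTop,
      (1 / 2 ^ n : ℝ) * Real.log (S n) ≤ -K / (n : ℝ) ^ 2 :=
  stmt6_general β c hβ0 hc p S hS hβ4
end

section
/- Let ε be a centered real random variable with sub-Gaussian parameter φ (E[exp(tε)] ≤ exp(φt²/2) for all t), let R > 0, and define ε^{(R)} = ε·1_{|ε|≤R} − E[ε·1_{|ε|≤R}]. Suppose additionally E[exp(t|ε|^{2a})] < ∞ for some a > 2 and t > 0. Then there is a function κ_R with κ_R → 0 as R → ∞ such that E[exp(t(ε − ε^{(R)}))] ≤ exp(κ_R t²/2) for all t ∈ ℝ and all sufficiently large R. -/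
open MeasureTheory Filter Real ProbabilityTheory Topology Set

/-!
Write `η_R = ε - ε^{(R)}`. A centered `η` with `E[η² exp(η²/κ)] ≤ κ/2` has moment generating
function at most `exp(κt²/2)`: integrate `exp x ≤ 1 + x + (x²/2) exp |x|` at `x = tη`, using
`|tη| ≤ κt²/4 + η²/κ`. Since `2a > 2`, the moment hypothesis makes `exp(c ε²)` integrable for
every `c`, which dominates `η_R² exp(η_R²/κ)` uniformly in `R` because `|η_R| ≤ |ε| + E|ε|`.
As `η_R → 0` pointwise, dominated convergence gives `E[η_R² exp(η_R²/κ)] → 0` for each fixed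
`κ`, and a diagonal choice of `κ_R → 0` finishes the proof.
-/

theorem Real.exp_le_one_add_add_sq_div_two_mul_exp_abs (x : ℝ) :
    exp x ≤ 1 + x + x ^ 2 / 2 * exp |x| := by
  rcases eq_or_ne 0 x with rfl | hx
  · simp
  obtain ⟨ξ, hξ, h⟩ := taylor_mean_remainder_lagrange_iteratedDeriv (f := exp) (n := 1) hx
    contDiff_exp.contDiffOn
  have hderiv : derivWithin exp (uIcc 0 x) 0 = 1 := by
    simpa using (hasDerivAt_exp 0).hasDerivWithinAt.derivWithin
      (uniqueDiffOn_uIcc hx _ left_mem_uIcc)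
  simp [taylorWithinEval_succ, iteratedDeriv_succ, hderiv] at h
  have hξx : exp ξ ≤ exp |x| :=
    exp_le_exp.2 <| hξ.2.le.trans <| max_le (abs_nonneg x) (le_abs_self x)
  nlinarith [sq_nonneg x]

theorem Real.abs_mul_le_add_sq_div {κ : ℝ} (hκ : 0 < κ) (t x : ℝ) :
    |t * x| ≤ κ * t ^ 2 / 4 + x ^ 2 / κ := by
  have hsq : κ * t ^ 2 / 4 + x ^ 2 / κ - |t * x| = (κ * |t| - 2 * |x|) ^ 2 / (4 * κ) := by
    rw [abs_mul]
    field_simp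
    linear_combination (-κ ^ 2) * sq_abs t - 4 * sq_abs x
  rw [← sub_nonneg, hsq]
  positivity

theorem Real.exp_mul_le_one_add_add_sq_mul_exp_sq_div {κ : ℝ} (hκ : 0 < κ) (t x : ℝ) :
    exp (t * x) ≤ 1 + t * x + t ^ 2 / 2 * exp (κ * t ^ 2 / 4) * (x ^ 2 * exp (x ^ 2 / κ)) :=
  calc exp (t * x) ≤ 1 + t * x + (t * x) ^ 2 / 2 * exp |t * x| :=
        exp_le_one_add_add_sq_div_two_mul_exp_abs _
    _ ≤ 1 + t * x + (t * x) ^ 2 / 2 * exp (κ * t ^ 2 / 4 + x ^ 2 / κ) := by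
        gcongr
        exact abs_mul_le_add_sq_div hκ t x
    _ = 1 + t * x + t ^ 2 / 2 * exp (κ * t ^ 2 / 4) * (x ^ 2 * exp (x ^ 2 / κ)) := by
        rw [exp_add]; ring

theorem Real.sq_mul_exp_sq_div_le_exp {κ x y : ℝ} (hκ : 0 ≤ κ) (hxy : |x| ≤ y) :
    x ^ 2 * exp (x ^ 2 / κ) ≤ exp ((κ⁻¹ + 1) * y ^ 2) := by
  have hsq : x ^ 2 ≤ y ^ 2 := sq_le_sq' (abs_le.1 hxy).1 (abs_le.1 hxy).2
  calc x ^ 2 * exp (x ^ 2 / κ) ≤ exp (y ^ 2) * exp (y ^ 2 / κ) := by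
        gcongr
        exact hsq.trans ((le_add_of_nonneg_right zero_le_one).trans (add_one_le_exp _))
    _ = exp ((κ⁻¹ + 1) * y ^ 2) := by rw [← exp_add]; ring_nf

theorem Real.abs_le_exp_sq (x : ℝ) : |x| ≤ exp (x ^ 2) := by
  nlinarith [add_one_le_exp (x ^ 2), sq_abs x, abs_nonneg x]

theorem exists_mul_sq_le_mul_rpow_add_const {p t₀ c : ℝ} (hp : 2 < p) (ht₀ : 0 < t₀)
    (hc : 0 ≤ c) : ∃ K, ∀ y : ℝ, 0 ≤ y → c * y ^ 2 ≤ t₀ * y ^ p + K := by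
  obtain ⟨M, hM⟩ := eventually_atTop.1
    ((tendsto_rpow_atTop (sub_pos.2 hp)).eventually_ge_atTop (c / t₀))
  refine ⟨c * M ^ 2, fun y hy => ?_⟩
  rcases le_or_gt M y with hMy | hyM
  · have hsplit : y ^ p = y ^ (p - 2) * y ^ 2 := by
      rw [← rpow_natCast, ← rpow_add' hy (by norm_num; linarith)]
      norm_num
    have hc_le : c ≤ t₀ * y ^ (p - 2) := (div_le_iff₀' ht₀).1 (hM y hMy)
    rw [hsplit]
    nlinarith [sq_nonneg y, mul_nonneg hc (sq_nonneg M)]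
  · have hpow : 0 ≤ t₀ * y ^ p := by positivity
    have hyM2 : c * y ^ 2 ≤ c * M ^ 2 := by gcongr
    linarith

theorem exists_tendsto_atTop_eventually {P : ℕ → ℝ → Prop} (h : ∀ n, ∀ᶠ R in atTop, P n R) :
    ∃ N : ℝ → ℕ, Tendsto N atTop atTop ∧ ∀ᶠ R in atTop, P (N R) R := by
  classical
  choose S hS using fun n => eventually_atTop.1 (h n)
  set ψ : ℕ → ℝ := fun n => max (S n) n
  refine ⟨fun R => Nat.findGreatest (fun n => ψ n ≤ R) ⌈R⌉₊, tendsto_atTop.2 fun n => ?_, ?_⟩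
  · filter_upwards [eventually_ge_atTop (ψ n)] with R hR
    have hnR : (n : ℝ) ≤ ⌈R⌉₊ := ((le_max_right _ _).trans hR).trans (Nat.le_ceil R)
    exact Nat.le_findGreatest (by exact_mod_cast hnR) hR
  · filter_upwards [eventually_ge_atTop (ψ 0)] with R hR
    exact hS _ _ ((le_max_left _ _).trans
      (Nat.findGreatest_spec (P := fun n => ψ n ≤ R) (Nat.zero_le _) hR))

section

variable {Ω : Type*} {m0 : MeasurableSpace Ω} {μ : Measure Ω}

theorem integrable_exp_mul_sq_of_integrable_exp_mul_abs_rpow {X : Ω → ℝ} {p t₀ c : ℝ}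
    (hX : AEStronglyMeasurable X μ) (hp : 2 < p) (ht₀ : 0 < t₀)
    (hint : Integrable (fun ω => exp (t₀ * |X ω| ^ p)) μ) (hc : 0 ≤ c) :
    Integrable (fun ω => exp (c * X ω ^ 2)) μ := by
  obtain ⟨K, hK⟩ := exists_mul_sq_le_mul_rpow_add_const hp ht₀ hc
  refine (hint.const_mul (exp K)).mono (by fun_prop) (ae_of_all _ fun ω => ?_)
  rw [norm_of_nonneg (exp_pos _).le, norm_of_nonneg (by positivity), ← exp_add, ← sq_abs]
  exact exp_le_exp.2 (by linarith [hK |X ω| (abs_nonneg _)])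

theorem integrable_exp_mul_sq_abs_add_const {X : Ω → ℝ} (hX : AEStronglyMeasurable X μ)
    (hint : ∀ c, 0 ≤ c → Integrable (fun ω => exp (c * X ω ^ 2)) μ) (C : ℝ) {c : ℝ}
    (hc : 0 ≤ c) : Integrable (fun ω => exp (c * (|X ω| + C) ^ 2)) μ := by
  refine ((hint (2 * c) (by positivity)).const_mul (exp (2 * c * C ^ 2))).mono (by fun_prop)
    (ae_of_all _ fun ω => ?_)
  rw [norm_of_nonneg (exp_pos _).le, norm_of_nonneg (by positivity), ← exp_add]
  refine exp_le_exp.2 ?_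
  nlinarith [sq_nonneg (|X ω| - C), sq_abs (X ω)]

theorem integrable_sq_mul_exp_sq_div {η g : Ω → ℝ} (hη : AEStronglyMeasurable η μ)
    (hg : ∀ c, 0 ≤ c → Integrable (fun ω => exp (c * g ω ^ 2)) μ) (hηg : ∀ ω, |η ω| ≤ g ω)
    {κ : ℝ} (hκ : 0 ≤ κ) : Integrable (fun ω => η ω ^ 2 * exp (η ω ^ 2 / κ)) μ :=
  (hg (κ⁻¹ + 1) (by positivity)).mono
    ((by fun_prop : Continuous fun x : ℝ => x ^ 2 * exp (x ^ 2 / κ)).comp_aestronglyMeasurable hη)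
    (ae_of_all _ fun ω => by
      rw [norm_of_nonneg (mul_nonneg (sq_nonneg _) (exp_pos _).le), norm_of_nonneg (exp_pos _).le]
      exact sq_mul_exp_sq_div_le_exp hκ (hηg ω))

theorem tendsto_integral_sq_mul_exp_sq_div {ι : Type*} {l : Filter ι} [l.IsCountablyGenerated]
    {η : ι → Ω → ℝ} {g : Ω → ℝ} (hη : ∀ i, AEStronglyMeasurable (η i) μ)
    (hg : ∀ c, 0 ≤ c → Integrable (fun ω => exp (c * g ω ^ 2)) μ)
    (hηg : ∀ i ω, |η i ω| ≤ g ω) (hlim : ∀ ω, Tendsto (fun i => η i ω) l (𝓝 0))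
    {κ : ℝ} (hκ : 0 ≤ κ) :
    Tendsto (fun i => ∫ ω, η i ω ^ 2 * exp (η i ω ^ 2 / κ) ∂μ) l (𝓝 0) := by
  have hcont : Continuous fun x : ℝ => x ^ 2 * exp (x ^ 2 / κ) := by fun_prop
  simpa using tendsto_integral_filter_of_dominated_convergence (f := fun _ => 0) _
    (Eventually.of_forall fun i => hcont.comp_aestronglyMeasurable (hη i))
    (Eventually.of_forall fun i => ae_of_all _ fun ω => by
      rw [norm_of_nonneg (mul_nonneg (sq_nonneg _) (exp_pos _).le)]
      exact sq_mul_exp_sq_div_le_exp hκ (hηg i ω))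
    (hg (κ⁻¹ + 1) (by positivity))
    (ae_of_all _ fun ω => by simpa [Function.comp_def] using (hcont.tendsto 0).comp (hlim ω))

theorem mgf_le_exp_of_integral_sq_mul_exp_sq_div_le [IsProbabilityMeasure μ] {η : Ω → ℝ}
    {κ : ℝ} (hκ : 0 < κ) (hη : Integrable η μ) (hmean : ∫ ω, η ω ∂μ = 0)
    (hint : Integrable (fun ω => η ω ^ 2 * exp (η ω ^ 2 / κ)) μ)
    (hsmall : ∫ ω, η ω ^ 2 * exp (η ω ^ 2 / κ) ∂μ ≤ κ / 2) (t : ℝ) :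
    mgf η μ t ≤ exp (κ * t ^ 2 / 2) := by
  set c := t ^ 2 / 2 * exp (κ * t ^ 2 / 4) with hc
  have hlin : Integrable (fun ω => 1 + t * η ω) μ := (integrable_const 1).add (hη.const_mul t)
  have hmajorant : Integrable (fun ω => 1 + t * η ω + c * (η ω ^ 2 * exp (η ω ^ 2 / κ))) μ :=
    hlin.add (hint.const_mul c)
  calc mgf η μ t
      ≤ ∫ ω, (1 + t * η ω + c * (η ω ^ 2 * exp (η ω ^ 2 / κ))) ∂μ :=
        integral_mono_of_nonneg (ae_of_all _ fun ω => (exp_pos _).le) hmajorant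
          (ae_of_all _ fun ω => exp_mul_le_one_add_add_sq_mul_exp_sq_div hκ t (η ω))
    _ = 1 + c * ∫ ω, η ω ^ 2 * exp (η ω ^ 2 / κ) ∂μ := by
        rw [integral_add hlin (hint.const_mul c),
          integral_add (integrable_const 1) (hη.const_mul t), integral_const_mul,
          integral_const_mul, hmean]
        simp
    _ ≤ 1 + κ * t ^ 2 / 4 * exp (κ * t ^ 2 / 4) := by
        have := mul_le_mul_of_nonneg_left hsmall (by positivity : 0 ≤ c)
        have hcκ : c * (κ / 2) = κ * t ^ 2 / 4 * exp (κ * t ^ 2 / 4) := by rw [hc]; ring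
        linarith
    _ ≤ exp (κ * t ^ 2 / 4) * exp (κ * t ^ 2 / 4) := by
        nlinarith [add_one_le_exp (κ * t ^ 2 / 4), exp_pos (κ * t ^ 2 / 4)]
    _ = exp (κ * t ^ 2 / 2) := by rw [← exp_add]; ring_nf

noncomputable def truncate (X : Ω → ℝ) (R : ℝ) (ω : Ω) : ℝ := if |X ω| ≤ R then X ω else 0

/-- The paper's `ε - ε^{(R)}`, where `ε^{(R)}` is the centered truncation of `ε` at level `R`. -/
noncomputable def truncationRemainder (μ : Measure Ω) (X : Ω → ℝ) (R : ℝ) (ω : Ω) : ℝ :=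
  X ω - truncate X R ω + ∫ ω', truncate X R ω' ∂μ

variable {X : Ω → ℝ}

theorem abs_truncate_le (R : ℝ) (ω : Ω) : |truncate X R ω| ≤ |X ω| := by
  unfold truncate; split_ifs <;> simp

theorem abs_sub_truncate_le (R : ℝ) (ω : Ω) : |X ω - truncate X R ω| ≤ |X ω| := by
  unfold truncate; split_ifs <;> simp

theorem eventually_truncate_eq (ω : Ω) : ∀ᶠ R in atTop, truncate X R ω = X ω := by
  filter_upwards [eventually_ge_atTop |X ω|] with R hR
  exact if_pos hR

theorem measurable_truncate (hX : Measurable X) (R : ℝ) : Measurable (truncate X R) :=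
  Measurable.ite (measurableSet_le hX.abs measurable_const) hX measurable_const

theorem integrable_truncate (hX : Measurable X) (hXi : Integrable X μ) (R : ℝ) :
    Integrable (truncate X R) μ :=
  hXi.mono (measurable_truncate hX R).aestronglyMeasurable
    (ae_of_all _ fun ω => by simpa only [norm_eq_abs] using abs_truncate_le R ω)

theorem tendsto_integral_truncate (hX : Measurable X) (hXi : Integrable X μ) :
    Tendsto (fun R => ∫ ω, truncate X R ω ∂μ) atTop (𝓝 (∫ ω, X ω ∂μ)) :=
  tendsto_integral_filter_of_dominated_convergence _
    (Eventually.of_forall fun R => (measurable_truncate hX R).aestronglyMeasurable)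
    (Eventually.of_forall fun R => ae_of_all _ fun ω => by
      simpa only [norm_eq_abs] using abs_truncate_le R ω)
    hXi.norm
    (ae_of_all _ fun ω => tendsto_const_nhds.congr'
      ((eventually_truncate_eq (X := X) ω).mono fun _ h => h.symm))

theorem measurable_truncationRemainder (hX : Measurable X) (R : ℝ) :
    Measurable (truncationRemainder μ X R) :=
  (hX.sub (measurable_truncate hX R)).add_const _

theorem integrable_truncationRemainder [IsFiniteMeasure μ] (hX : Measurable X)
    (hXi : Integrable X μ) (R : ℝ) : Integrable (truncationRemainder μ X R) μ :=
  (hXi.sub (integrable_truncate hX hXi R)).add (integrable_const _)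

theorem integral_truncationRemainder [IsProbabilityMeasure μ] (hX : Measurable X)
    (hXi : Integrable X μ) (R : ℝ) : ∫ ω, truncationRemainder μ X R ω ∂μ = ∫ ω, X ω ∂μ := by
  have hdiff : Integrable (fun ω => X ω - truncate X R ω) μ :=
    hXi.sub (integrable_truncate hX hXi R)
  unfold truncationRemainder
  rw [integral_add hdiff (integrable_const _), integral_sub hXi (integrable_truncate hX hXi R)]
  simp

theorem abs_truncationRemainder_le (hX : Measurable X) (hXi : Integrable X μ) (R : ℝ)
    (ω : Ω) : |truncationRemainder μ X R ω| ≤ |X ω| + ∫ ω', |X ω'| ∂μ :=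
  calc |truncationRemainder μ X R ω|
      ≤ |X ω - truncate X R ω| + |∫ ω', truncate X R ω' ∂μ| := abs_add_le _ _
    _ ≤ |X ω| + ∫ ω', |X ω'| ∂μ := by
      refine add_le_add (abs_sub_truncate_le R ω) ((abs_integral_le_integral_abs).trans ?_)
      exact integral_mono (integrable_truncate hX hXi R).abs hXi.abs (abs_truncate_le R)

theorem tendsto_truncationRemainder (hX : Measurable X) (hXi : Integrable X μ) (ω : Ω) :
    Tendsto (fun R => truncationRemainder μ X R ω) atTop (𝓝 (∫ ω', X ω' ∂μ)) := by
  have hdiff : Tendsto (fun R => X ω - truncate X R ω) atTop (𝓝 0) :=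
    tendsto_const_nhds.congr'
      ((eventually_truncate_eq (X := X) ω).mono fun _ h => by simp only [h, sub_self])
  simpa [truncationRemainder] using hdiff.add (tendsto_integral_truncate hX hXi)

end

theorem stmt19_general {Ω : Type*} {m0 : MeasurableSpace Ω} (μ : Measure Ω) [IsProbabilityMeasure μ]
    (ε : Ω → ℝ) (hmeas : Measurable ε)
    (hcent : ∫ ω, ε ω ∂μ = 0)
    (a t₀ : ℝ) (ha : 2 < a) (ht₀ : 0 < t₀)
    (hint : Integrable (fun ω => Real.exp (t₀ * |ε ω| ^ (2 * a))) μ)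
    (εR : ℝ → Ω → ℝ)
    (hεR : ∀ R ω, εR R ω =
      (if |ε ω| ≤ R then ε ω else 0) - ∫ ω', (if |ε ω'| ≤ R then ε ω' else 0) ∂μ) :
    ∃ κ : ℝ → ℝ, Tendsto κ atTop (nhds 0) ∧
      ∃ R₀ : ℝ, ∀ R ≥ R₀, ∀ t : ℝ,
        ∫ ω, Real.exp (t * (ε ω - εR R ω)) ∂μ ≤ Real.exp (κ R * t ^ 2 / 2) := by
  have hsq : ∀ c, 0 ≤ c → Integrable (fun ω => exp (c * ε ω ^ 2)) μ := fun c hc =>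
    integrable_exp_mul_sq_of_integrable_exp_mul_abs_rpow hmeas.aestronglyMeasurable
      (by linarith) ht₀ hint hc
  have hε : Integrable ε μ := (hsq 1 zero_le_one).mono hmeas.aestronglyMeasurable
    (ae_of_all _ fun ω => by simpa [norm_of_nonneg (exp_pos _).le] using abs_le_exp_sq (ε ω))
  have hη : ∀ R ω, ε ω - εR R ω = truncationRemainder μ ε R ω := fun R ω => by
    simp only [hεR, truncationRemainder, truncate]; ring
  have hdom : ∀ c, 0 ≤ c → Integrable (fun ω => exp (c * (|ε ω| + ∫ ω', |ε ω'| ∂μ) ^ 2)) μ :=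
    fun c hc => integrable_exp_mul_sq_abs_add_const hmeas.aestronglyMeasurable hsq _ hc
  have hsmall : ∀ n : ℕ, ∀ᶠ R in atTop, ∫ ω, truncationRemainder μ ε R ω ^ 2 *
      exp (truncationRemainder μ ε R ω ^ 2 / (1 / (n + 1))) ∂μ ≤ 1 / (n + 1) / 2 := fun n =>
    (tendsto_integral_sq_mul_exp_sq_div
      (fun R => (measurable_truncationRemainder hmeas R).aestronglyMeasurable) hdom
      (abs_truncationRemainder_le hmeas hε)
      (fun ω => hcent ▸ tendsto_truncationRemainder hmeas hε ω)
      (by positivity)).eventually (ge_mem_nhds (by positivity))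
  obtain ⟨N, hN, hev⟩ := exists_tendsto_atTop_eventually hsmall
  obtain ⟨R₀, hR₀⟩ := eventually_atTop.1 hev
  refine ⟨fun R => 1 / (N R + 1), tendsto_one_div_add_atTop_nhds_zero_nat.comp hN, R₀,
    fun R hR t => ?_⟩
  simp_rw [hη]
  exact mgf_le_exp_of_integral_sq_mul_exp_sq_div_le (by positivity)
    (integrable_truncationRemainder hmeas hε R)
    (by rw [integral_truncationRemainder hmeas hε, hcent])
    (integrable_sq_mul_exp_sq_div (measurable_truncationRemainder hmeas R).aestronglyMeasurable
      hdom (abs_truncationRemainder_le hmeas hε R) (by positivity))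
    (hR₀ R hR) t

/-- the centered truncation remainder `ε − ε^{(R)}` of a sub-Gaussian
random variable with a strong exponential moment is sub-Gaussian with a parameter
`κ_R` tending to `0` as the truncation level `R → ∞`. -/
theorem stmt19 {Ω : Type*} {m0 : MeasurableSpace Ω} (μ : Measure Ω) [IsProbabilityMeasure μ]
    (ε : Ω → ℝ) (hmeas : Measurable ε)
    (hcent : ∫ ω, ε ω ∂μ = 0)
    (φ : ℝ) (hφ : 0 < φ)
    (hsub : ∀ t : ℝ, ∫ ω, Real.exp (t * ε ω) ∂μ ≤ Real.exp (φ * t ^ 2 / 2))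
    (a t₀ : ℝ) (ha : 2 < a) (ht₀ : 0 < t₀)
    (hint : Integrable (fun ω => Real.exp (t₀ * |ε ω| ^ (2 * a))) μ)
    (εR : ℝ → Ω → ℝ)
    (hεR : ∀ R ω, εR R ω =
      (if |ε ω| ≤ R then ε ω else 0) - ∫ ω', (if |ε ω'| ≤ R then ε ω' else 0) ∂μ) :
    ∃ κ : ℝ → ℝ, Tendsto κ atTop (nhds 0) ∧
      ∃ R₀ : ℝ, ∀ R ≥ R₀, ∀ t : ℝ,
        ∫ ω, Real.exp (t * (ε ω - εR R ω)) ∂μ ≤ Real.exp (κ R * t ^ 2 / 2) :=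
  stmt19_general (m0 := m0) μ ε hmeas hcent a t₀ ha ht₀ hint εR hεR
end
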